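/- With I(r) = {b ∈ ℤ[i] : |b| ≥ √2, 1/r ≤ |b| ≤ 2/r, Im b ≥ 1} for 0 < r < 1, one has lim_{r→0⁺} r² · #I(r) = 3π/2. In particular, there exists r₀ > 0 such that r^{−2} ≤ #I(r) ≤ 5·r^{−2} for all 0 < r ≤ r₀. -/

import Mathlib

open Complex MeasureTheory Filter Set
open scoped ENNReal

noncomputable section

/-- The fundamental domain `𝔇 = {x+iy : x,y ∈ [-1/2,1/2)}`. -/
def fund : Set ℂ := {z : ℂ | z.re ∈ Set.Ico (-(1:ℝ)/2) (1/2) ∧ z.im ∈ Set.Ico (-(1:ℝ)/2) (1/2)}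

/-- `𝔇* = 𝔇 \ {0}`. -/
def fundStar : Set ℂ := fund \ {0}

/-- Nearest Gaussian integer `[z]`, the unique Gaussian integer with `z - [z] ∈ 𝔇`. -/
def nearestGauss (z : ℂ) : ℂ :=
  ((⌊z.re + 1/2⌋ : ℤ) : ℂ) + ((⌊z.im + 1/2⌋ : ℤ) : ℂ) * Complex.I

/-- The Hurwitz map `T(z) = 1/z - [1/z]` (with `T 0 = 0`). -/
def hT (z : ℂ) : ℂ := 1/z - nearestGauss (1/z)

/-- HCF partial quotient `a_{n+1}(z) = [1 / T^n(z)]` (0-based index). -/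
def hA (z : ℂ) (n : ℕ) : ℂ := nearestGauss (1 / (hT^[n] z))

/-- `z` is a Gaussian integer. -/
def IsGaussInt (z : ℂ) : Prop := ∃ a b : ℤ, z = (a : ℂ) + (b : ℂ) * Complex.I

/-- The set `I = {a ∈ ℤ[i] : |a| ≥ √2}` of possible partial quotients. -/
def setI : Set ℂ := {a : ℂ | IsGaussInt a ∧ Real.sqrt 2 ≤ ‖a‖}

/-- The matrix `((p(u), p(u⁻)), (q(u), q(u⁻))) = ((0,1),(1,0)) * ∏ ((u_j,1),(1,0))`. -/
def cfMatrix (u : List ℂ) : Matrix (Fin 2) (Fin 2) ℂ :=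
  !![0, 1; 1, 0] * (u.map fun a => !![a, 1; 1, 0]).prod

/-- Continuant numerator `p(u)`. -/
def contP (u : List ℂ) : ℂ := cfMatrix u 0 0

/-- Continuant denominator `q(u)`. -/
def contQ (u : List ℂ) : ℂ := cfMatrix u 1 0

/-- The cylinder `C(u) = {z ∈ 𝔇 : a_1(z) = u_1, …, a_n(z) = u_n}`. -/
def cylinder (u : List ℂ) : Set ℂ :=
  {z ∈ fund | ∀ j : Fin u.length, hA z j = u.get j}

/-- The prototype set `𝔇_u = T^n(C(u))`. -/
def proto (u : List ℂ) : Set ℂ := hT^[u.length] '' cylinder u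

/-- The Möbius transformation `T_u : z ↦ (p(u⁻) z + p(u)) / (q(u⁻) z + q(u))`. -/
def moebiusT (u : List ℂ) (z : ℂ) : ℂ :=
  (cfMatrix u 0 1 * z + cfMatrix u 0 0) / (cfMatrix u 1 1 * z + cfMatrix u 1 0)

/-- `u` is full if `𝔇_u = 𝔇`. -/
def FullSeq (u : List ℂ) : Prop := proto u = fund

/-- `u` is regular if `𝔇_u` has nonempty interior. -/
def RegularSeq (u : List ℂ) : Prop := (interior (proto u)).Nonempty

/-- The length of the (finite) HCF expansion of a Gaussian rational `w ∈ 𝔇*`: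
the least `N` with `T^N(w) = 0`. -/
def hcfLength (w : ℂ) : ℕ := sInf {N : ℕ | hT^[N] w = 0}

/-- `dd(z, w)`: the number of indices `1 ≤ n ≤ N` where the HCF partial quotients of `z`
and of the Gaussian rational `w` (with expansion of length `N`) differ. -/
def ddiff (z w : ℂ) : ℕ := {n : ℕ | n < hcfLength w ∧ hA z n ≠ hA w n}.ncard

/-- The sequence `v_k = (3, -2i)` followed by `k` repetitions of `(-2, 2i, -2, -2i)`. -/
def vSeq (k : ℕ) : List ℂ :=
  [3, -2*Complex.I] ++ (List.replicate k [-2, 2*Complex.I, -2, -2*Complex.I]).flatten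

/-- The sequence `ṽ_k = (3+i, 2i)` followed by `k` repetitions of `(-2+i, 2i, -2+i, 2i)`. -/
def vtSeq (k : ℕ) : List ℂ :=
  [3+Complex.I, 2*Complex.I] ++
    (List.replicate k [-2+Complex.I, 2*Complex.I, -2+Complex.I, 2*Complex.I]).flatten

/-- The lower order `λ(ψ) = liminf_{x→∞} (-log ψ(x)) / log x`, valued in `ℝ≥0∞`. -/
def lambdaPsi (ψ : ℝ → ℝ) : ℝ≥0∞ :=
  Filter.liminf (fun x : ℝ => ENNReal.ofReal (-Real.log (ψ x) / Real.log x)) Filter.atTop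

/-- The set `E(ψ)` of `z ∈ 𝔇*` admitting infinitely many Gaussian rational approximations
`p/q` with `|z - p/q| ≤ ψ(|q|)` whose HCF expansions differ from that of `z` in more and
more places. -/
def Epsi (ψ : ℝ → ℝ) : Set ℂ :=
  {z : ℂ | z ∈ fundStar ∧ ∃ p q : ℕ → ℂ,
    (∀ n, IsGaussInt (p n) ∧ IsGaussInt (q n) ∧ q n ≠ 0 ∧
      ‖z - p n / q n‖ ≤ ψ ‖q n‖) ∧
    Function.Injective (fun n => p n / q n) ∧
    Filter.Tendsto (fun n => ddiff z (p n / q n)) Filter.atTop Filter.atTop}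

/-- The `ψ`-approximable set `W(ψ)`. -/
def Wpsi (ψ : ℝ → ℝ) : Set ℂ :=
  {z : ℂ | z ∈ fundStar ∧ {pq : ℂ × ℂ | IsGaussInt pq.1 ∧ IsGaussInt pq.2 ∧ pq.2 ≠ 0 ∧
    ‖z - pq.1 / pq.2‖ ≤ ψ ‖pq.2‖}.Infinite}

end

/-- `I(r) = {b ∈ ℤ[i] : |b| ≥ √2, 1/r ≤ |b| ≤ 2/r, Im b ≥ 1}`. -/
def setIr (r : ℝ) : Set ℂ :=
  {b : ℂ | IsGaussInt b ∧ Real.sqrt 2 ≤ ‖b‖ ∧ 1/r ≤ ‖b‖ ∧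
    ‖b‖ ≤ 2/r ∧ 1 ≤ b.im}

/-! Every `z ∈ ℂ` lies in the translate `b + 𝔇` of exactly one Gaussian integer, namely
`b = [z]`, so `#I(r)` is the area of `[·]⁻¹' I(r)`. Since `|z - [z]| ≤ 1`, this union of unit
squares lies in the upper half annulus with radii `1/r - 1` and `2/r + 1`, and it covers the
half annulus with radii `1/r + 1` and `2/r - 1` up to a strip of height `3/2` along the real
axis. Both half annuli have area `(3π/2) r⁻² + O(r⁻¹)`. -/

open scoped Topology ComplexConjugate

namespace Complex

lemma volume_setOf_re_mem_and_im_mem {A B : Set ℝ} (hA : MeasurableSet A) (hB : MeasurableSet B) :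
    volume {z : ℂ | z.re ∈ A ∧ z.im ∈ B} = volume A * volume B := by
  rw [show {z : ℂ | z.re ∈ A ∧ z.im ∈ B} = measurableEquivRealProd ⁻¹' (A ×ˢ B) from rfl,
    volume_preserving_equiv_real_prod.measure_preimage (hA.prod hB).nullMeasurableSet,
    Measure.volume_eq_prod, Measure.prod_prod]

lemma volume_setOf_im_eq_zero : volume {z : ℂ | z.im = 0} = 0 := by
  simpa using volume_setOf_re_mem_and_im_mem MeasurableSet.univ (measurableSet_singleton (0 : ℝ))

lemma volume_inter_setOf_im_nonneg {s : Set ℂ} (hs : MeasurableSet s)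
    (hconj : conj ⁻¹' s = s) :
    2 * volume (s ∩ {z | 0 ≤ z.im}) = volume s := by
  have hL : MeasurableSet (s ∩ {z : ℂ | z.im ≤ 0}) :=
    hs.inter (measurableSet_le measurable_im measurable_const)
  have hlower : volume (s ∩ {z | z.im ≤ 0}) = volume (s ∩ {z | 0 ≤ z.im}) := by
    have hreflect : conj ⁻¹' (s ∩ {z | z.im ≤ 0}) = s ∩ {z | 0 ≤ z.im} := by
      rw [Set.preimage_inter, hconj]; ext z; simp
    have hconj_mp : MeasurePreserving (conj : ℂ → ℂ) volume volume := conjLIE.measurePreserving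
    rw [← hreflect, hconj_mp.measure_preimage hL.nullMeasurableSet]
  have hcover : s ∩ {z | 0 ≤ z.im} ∪ s ∩ {z | z.im ≤ 0} = s := by
    rw [← Set.inter_union_distrib_left]
    exact Set.inter_eq_left.2 fun z _ => le_total 0 z.im
  have hnull : volume (s ∩ {z | 0 ≤ z.im} ∩ (s ∩ {z | z.im ≤ 0})) = 0 :=
    measure_mono_null (fun z hz => le_antisymm hz.2.2 hz.1.2) volume_setOf_im_eq_zero
  have := measure_union_add_inter (μ := volume) (s ∩ {z | 0 ≤ z.im}) hL
  rw [hcover, hnull, add_zero, hlower] at this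
  rw [two_mul, this]

end Complex

def halfAnnulus (a b : ℝ) : Set ℂ := {z : ℂ | a ≤ ‖z‖ ∧ ‖z‖ ≤ b ∧ 0 ≤ z.im}

lemma volume_halfAnnulus {a b : ℝ} (ha : 0 ≤ a) (hab : a ≤ b) :
    volume (halfAnnulus a b) = ENNReal.ofReal (Real.pi / 2 * (b ^ 2 - a ^ 2)) := by
  set A := Metric.closedBall (0 : ℂ) b \ Metric.ball 0 a
  have hdisk (c : ℝ) (hc : 0 ≤ c) :
      ENNReal.ofReal c ^ 2 * NNReal.pi = ENNReal.ofReal (Real.pi * c ^ 2) := by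
    rw [← ENNReal.ofReal_pow hc, ← ENNReal.ofReal_coe_nnreal, NNReal.coe_real_pi,
      ← ENNReal.ofReal_mul (by positivity), mul_comm]
  have hA : volume A = ENNReal.ofReal (Real.pi * (b ^ 2 - a ^ 2)) := by
    have hsub : Metric.ball (0 : ℂ) a ⊆ Metric.closedBall 0 b :=
      Metric.ball_subset_closedBall.trans (Metric.closedBall_subset_closedBall hab)
    rw [measure_sdiff hsub measurableSet_ball.nullMeasurableSet measure_ball_lt_top.ne,
      Complex.volume_closedBall, Complex.volume_ball, hdisk b (ha.trans hab), hdisk a ha,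
      ← ENNReal.ofReal_sub _ (by positivity), mul_sub]
  have hhalf := Complex.volume_inter_setOf_im_nonneg
    (measurableSet_closedBall.diff measurableSet_ball) (s := A) (by ext z; simp [A])
  have hann : halfAnnulus a b = A ∩ {z | 0 ≤ z.im} := by
    ext z; simp [A, halfAnnulus, and_assoc, and_comm]
  rw [hann, show Real.pi / 2 * (b ^ 2 - a ^ 2) = Real.pi * (b ^ 2 - a ^ 2) / 2 by ring,
    ENNReal.ofReal_div_of_pos two_pos, ENNReal.ofReal_ofNat, ← hA,
    ENNReal.eq_div_iff two_ne_zero ENNReal.ofNat_ne_top, hhalf]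

lemma measurableSet_fund : MeasurableSet fund :=
  (measurable_re measurableSet_Ico).inter (measurable_im measurableSet_Ico)

lemma volume_fund : volume fund = 1 := by
  rw [fund, Complex.volume_setOf_re_mem_and_im_mem measurableSet_Ico measurableSet_Ico,
    Real.volume_Ico]
  norm_num

lemma norm_le_one_of_mem_fund {w : ℂ} (hw : w ∈ fund) : ‖w‖ ≤ 1 := by
  obtain ⟨⟨hre₁, hre₂⟩, him₁, him₂⟩ := hw
  have hre : |w.re| ≤ 1 / 2 := abs_le.2 ⟨by linarith, hre₂.le⟩
  have him : |w.im| ≤ 1 / 2 := abs_le.2 ⟨by linarith, him₂.le⟩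
  linarith [norm_le_abs_re_add_abs_im w]

lemma isGaussInt_nearestGauss (z : ℂ) : IsGaussInt (nearestGauss z) := ⟨_, _, rfl⟩

lemma nearestGauss_eq_iff {z b : ℂ} (hb : IsGaussInt b) : nearestGauss z = b ↔ z - b ∈ fund := by
  obtain ⟨m, n, rfl⟩ := hb
  simp only [nearestGauss, one_div, Complex.ext_iff, add_re, intCast_re, mul_re, I_re, mul_zero,
    intCast_im, I_im, mul_one, sub_self, add_zero, Int.cast_inj, Int.floor_eq_iff, add_im, mul_im,
    zero_add, fund, mem_Ico, mem_ofPred_eq, sub_re, sub_im]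
  constructor <;> intro h <;> refine ⟨⟨?_, ?_⟩, ?_, ?_⟩ <;> linarith [h.1.1, h.1.2, h.2.1, h.2.2]

lemma sub_nearestGauss_mem_fund (z : ℂ) : z - nearestGauss z ∈ fund :=
  (nearestGauss_eq_iff (isGaussInt_nearestGauss z)).1 rfl

lemma nearestGauss_preimage_singleton {b : ℂ} (hb : IsGaussInt b) :
    nearestGauss ⁻¹' {b} = (· - b) ⁻¹' fund :=
  Set.ext fun _ => nearestGauss_eq_iff hb

lemma volume_nearestGauss_preimage_singleton {b : ℂ} (hb : IsGaussInt b) :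
    volume (nearestGauss ⁻¹' {b}) = 1 := by
  rw [nearestGauss_preimage_singleton hb, (measurePreserving_sub_right volume b).measure_preimage
    measurableSet_fund.nullMeasurableSet, volume_fund]

lemma volume_nearestGauss_preimage {S : Set ℂ} (hS : S.Finite) (hG : ∀ b ∈ S, IsGaussInt b) :
    volume (nearestGauss ⁻¹' S) = S.ncard := by
  lift S to Finset ℂ using hS
  have hmeas (b : ℂ) (hb : b ∈ S) : MeasurableSet (nearestGauss ⁻¹' {b}) :=
    nearestGauss_preimage_singleton (hG b hb) ▸ measurableSet_fund.preimage (measurable_sub_const b)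
  rw [← Set.biUnion_preimage_singleton, Finset.set_biUnion_coe,
    measure_biUnion_finset (Set.pairwiseDisjoint_fiber _ _) hmeas]
  simp [Finset.sum_congr rfl fun b hb => volume_nearestGauss_preimage_singleton (hG b hb)]

lemma finite_setOf_isGaussInt_norm_le (R : ℝ) : {b : ℂ | IsGaussInt b ∧ ‖b‖ ≤ R}.Finite := by
  let M := ⌈R⌉
  refine (((Set.finite_Icc (-M) M).prod (Set.finite_Icc (-M) M)).image
    fun p : ℤ × ℤ => (p.1 : ℂ) + p.2 * I).subset ?_
  rintro _ ⟨⟨m, n, rfl⟩, hR⟩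
  have hbound (k : ℤ) (hk : |(k : ℝ)| ≤ ‖(m : ℂ) + n * I‖) : k ∈ Icc (-M) M := by
    have := abs_le.1 (hk.trans (hR.trans (Int.le_ceil R)))
    exact ⟨by exact_mod_cast this.1, by exact_mod_cast this.2⟩
  refine ⟨(m, n), ⟨hbound m ?_, hbound n ?_⟩, rfl⟩
  · simpa using abs_re_le_norm ((m : ℂ) + n * I)
  · simpa using abs_im_le_norm ((m : ℂ) + n * I)

lemma finite_setIr (r : ℝ) : (setIr r).Finite :=
  (finite_setOf_isGaussInt_norm_le (2 / r)).subset fun _ hb => ⟨hb.1, hb.2.2.2.1⟩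

lemma nearestGauss_preimage_setIr_subset (r : ℝ) :
    nearestGauss ⁻¹' setIr r ⊆ halfAnnulus (1 / r - 1) (2 / r + 1) := by
  rintro z ⟨-, -, hlo, hhi, him⟩
  have hfund := sub_nearestGauss_mem_fund z
  have hdist := norm_le_one_of_mem_fund hfund
  refine ⟨?_, ?_, ?_⟩
  · linarith [norm_sub_norm_le (nearestGauss z) z, norm_sub_rev (nearestGauss z) z]
  · linarith [norm_le_norm_add_norm_sub' z (nearestGauss z)]
  · linarith [hfund.2.1, sub_im z (nearestGauss z)]

lemma halfAnnulus_subset_nearestGauss_preimage_setIr_union {r : ℝ} (hr₀ : 0 < r) (hr : r ≤ 1 / 2) :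
    halfAnnulus (1 / r + 1) (2 / r - 1) ⊆
      nearestGauss ⁻¹' setIr r ∪ {z | z.re ∈ Icc (-(2 / r)) (2 / r) ∧ z.im ∈ Ico 0 (3 / 2)} := by
  rintro z ⟨hlo, hhi, him⟩
  rcases lt_or_ge z.im (3 / 2) with hlow | hhigh
  · have hre := abs_le.1 ((abs_re_le_norm z).trans hhi)
    exact Or.inr ⟨⟨by linarith, by linarith⟩, him, hlow⟩
  · left
    have hfund := sub_nearestGauss_mem_fund z
    have hdist := norm_le_one_of_mem_fund hfund
    have hinv : 2 ≤ 1 / r := by rw [le_div_iff₀ hr₀]; linarith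
    have hsqrt2 : Real.sqrt 2 ≤ 2 := by rw [Real.sqrt_le_left] <;> norm_num
    refine ⟨isGaussInt_nearestGauss z, ?_, ?_, ?_, ?_⟩
    · linarith [norm_sub_norm_le z (nearestGauss z)]
    · linarith [norm_sub_norm_le z (nearestGauss z)]
    · linarith [norm_le_norm_add_norm_sub' (nearestGauss z) z, norm_sub_rev (nearestGauss z) z]
    · linarith [hfund.2.2, sub_im z (nearestGauss z)]

lemma ncard_setIr_le {r : ℝ} (hr₀ : 0 < r) (hr : r ≤ 1) :
    ((setIr r).ncard : ℝ) ≤ Real.pi / 2 * ((2 / r + 1) ^ 2 - (1 / r - 1) ^ 2) := by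
  have hinv : 1 ≤ 1 / r := by rw [le_div_iff₀ hr₀]; linarith
  have htwo : 2 / r = 2 * (1 / r) := by ring
  have hvol := measure_mono (μ := volume) (nearestGauss_preimage_setIr_subset r)
  rw [volume_nearestGauss_preimage (finite_setIr r) fun b hb => hb.1,
    volume_halfAnnulus (by linarith) (by linarith)] at hvol
  have hpos : 0 ≤ (2 / r + 1) ^ 2 - (1 / r - 1) ^ 2 := by rw [htwo]; nlinarith
  simpa using ENNReal.toReal_le_of_le_ofReal (by positivity) hvol

lemma le_ncard_setIr {r : ℝ} (hr₀ : 0 < r) (hr : r ≤ 1 / 2) :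
    Real.pi / 2 * ((2 / r - 1) ^ 2 - (1 / r + 1) ^ 2) - 6 / r ≤ (setIr r).ncard := by
  have hinv : 2 ≤ 1 / r := by rw [le_div_iff₀ hr₀]; linarith
  have htwo : 2 / r = 2 * (1 / r) := by ring
  have hstrip : volume {z : ℂ | z.re ∈ Icc (-(2 / r)) (2 / r) ∧ z.im ∈ Ico 0 (3 / 2)} =
      ENNReal.ofReal (6 / r) := by
    rw [Complex.volume_setOf_re_mem_and_im_mem measurableSet_Icc measurableSet_Ico,
      Real.volume_Icc, Real.volume_Ico, sub_neg_eq_add, ← ENNReal.ofReal_mul (by positivity)]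
    ring_nf
  have hvol := (measure_mono (μ := volume)
    (halfAnnulus_subset_nearestGauss_preimage_setIr_union hr₀ hr)).trans (measure_union_le _ _)
  rw [volume_halfAnnulus (by positivity) (by linarith),
    volume_nearestGauss_preimage (finite_setIr r) fun b hb => hb.1, hstrip,
    ← ENNReal.ofReal_natCast, ← ENNReal.ofReal_add (by positivity) (by positivity),
    ENNReal.ofReal_le_ofReal_iff (by positivity)] at hvol
  linarith

lemma tendsto_sq_mul_ncard_setIr :
    Tendsto (fun r : ℝ => r ^ 2 * ((setIr r).ncard : ℝ)) (𝓝[>] 0) (𝓝 (3 * Real.pi / 2)) := by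
  have hlower : Tendsto (fun r : ℝ => Real.pi / 2 * ((2 - r) ^ 2 - (1 + r) ^ 2) - 6 * r)
      (𝓝[>] 0) (𝓝 (3 * Real.pi / 2)) :=
    ((by fun_prop : Continuous _).tendsto' 0 _ (by ring)).mono_left nhdsWithin_le_nhds
  have hupper : Tendsto (fun r : ℝ => Real.pi / 2 * ((2 + r) ^ 2 - (1 - r) ^ 2))
      (𝓝[>] 0) (𝓝 (3 * Real.pi / 2)) :=
    ((by fun_prop : Continuous _).tendsto' 0 _ (by ring)).mono_left nhdsWithin_le_nhds
  have hsmall : Ioc (0 : ℝ) (1 / 2) ∈ 𝓝[>] 0 := Ioc_mem_nhdsGT (by norm_num)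
  refine tendsto_of_tendsto_of_tendsto_of_le_of_le' hlower hupper ?_ ?_ <;>
    filter_upwards [hsmall] with r ⟨hr₀, hr⟩
  · calc Real.pi / 2 * ((2 - r) ^ 2 - (1 + r) ^ 2) - 6 * r
        = r ^ 2 * (Real.pi / 2 * ((2 / r - 1) ^ 2 - (1 / r + 1) ^ 2) - 6 / r) := by
          field_simp
      _ ≤ r ^ 2 * (setIr r).ncard := by gcongr; exact le_ncard_setIr hr₀ hr
  · calc r ^ 2 * ((setIr r).ncard : ℝ)
        ≤ r ^ 2 * (Real.pi / 2 * ((2 / r + 1) ^ 2 - (1 / r - 1) ^ 2)) := by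
          gcongr; exact ncard_setIr_le hr₀ (by linarith)
      _ = Real.pi / 2 * ((2 + r) ^ 2 - (1 - r) ^ 2) := by field_simp

theorem card_setIr_asymptotics :
    Filter.Tendsto (fun r : ℝ => r^2 * ((setIr r).ncard : ℝ))
      (nhdsWithin 0 (Set.Ioi 0)) (nhds (3 * Real.pi / 2)) ∧
    ∃ r₀ : ℝ, 0 < r₀ ∧ ∀ r : ℝ, 0 < r → r ≤ r₀ →
      1 / r^2 ≤ ((setIr r).ncard : ℝ) ∧ ((setIr r).ncard : ℝ) ≤ 5 / r^2 := by
  refine ⟨tendsto_sq_mul_ncard_setIr, ?_⟩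
  have hmem : Ioo 1 5 ∈ 𝓝 (3 * Real.pi / 2) :=
    Ioo_mem_nhds (by linarith [Real.pi_gt_three]) (by linarith [Real.pi_lt_d2])
  obtain ⟨δ, hδ, hsub⟩ := mem_nhdsGT_iff_exists_Ioo_subset.1 (tendsto_sq_mul_ncard_setIr hmem)
  refine ⟨δ / 2, half_pos hδ, fun r hr₀ hr => ?_⟩
  obtain ⟨hgt, hlt⟩ := hsub ⟨hr₀, by linarith⟩
  have hr2 : 0 < r ^ 2 := by positivity
  constructor
  · rw [div_le_iff₀ hr2]; linarith
  · rw [le_div_iff₀ hr2]; linarith
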